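/- Let z be a real random variable with mean 0 and variance σ² > 0 and E[|z|³] < ∞. Then there exists a random variable z* such that for all Lipschitz (hence a.e. differentiable with bounded derivative) functions f: ℝ → ℝ, E[z f(z)] = σ² E[f'(z*)]. -/

import Mathlib

/-!
Write `z f(z) - z f(0) = z ∫₀^z f' = ∫ f'(t) K(z, t) dt` with the kernel
`K(z, t) = z (1{0 < t ≤ z} - 1{z < t ≤ 0}) ≥ 0`, whose total mass is `z²`. Taking expectations and
swapping the integrals (Fubini, justified by `E[z²] < ∞` and the boundedness of `f'`) gives
`E[z f(z)] - f(0) E[z] = ∫ f'(t) q(t) dt` with `q(t) = E[K(z, t)] ≥ 0` and `∫ q = E[z²] = σ²`.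
Since `E[z] = 0`, the law of `z*` is the probability measure with density `q / σ²`.
-/

open MeasureTheory ProbabilityTheory Set
open scoped NNReal

noncomputable def zeroBiasKernel (z t : ℝ) : ℝ :=
  z * ((Ioc 0 z).indicator 1 t - (Ioc z 0).indicator 1 t)

lemma zeroBiasKernel_nonneg (z t : ℝ) : 0 ≤ zeroBiasKernel z t := by
  rcases le_total 0 z with hz | hz
  · have : (Ioc z 0).indicator (1 : ℝ → ℝ) t = 0 :=
      indicator_of_notMem (fun h => by linarith [h.1, h.2, hz]) _
    simp only [zeroBiasKernel, this, sub_zero]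
    exact mul_nonneg hz (indicator_nonneg (fun _ _ => zero_le_one) _)
  · have : (Ioc 0 z).indicator (1 : ℝ → ℝ) t = 0 :=
      indicator_of_notMem (fun h => by linarith [h.1, h.2, hz]) _
    simp only [zeroBiasKernel, this, zero_sub]
    exact mul_nonneg_of_nonpos_of_nonpos hz
      (neg_nonpos.2 (indicator_nonneg (fun _ _ => zero_le_one) _))

lemma measurable_zeroBiasKernel : Measurable (Function.uncurry zeroBiasKernel) := by
  unfold Function.uncurry zeroBiasKernel
  simp only [indicator_apply, mem_Ioc, Pi.one_apply]
  refine measurable_fst.mul (Measurable.sub ?_ ?_) <;>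
    refine Measurable.ite ?_ measurable_const measurable_const
  · exact (measurableSet_lt measurable_const measurable_snd).inter
      (measurableSet_le measurable_snd measurable_fst)
  · exact (measurableSet_lt measurable_fst measurable_snd).inter
      (measurableSet_le measurable_snd measurable_const)

lemma integral_mul_zeroBiasKernel {g : ℝ → ℝ} {z : ℝ} (hg : IntervalIntegrable g volume 0 z) :
    ∫ t, g t * zeroBiasKernel z t = z * ∫ t in 0..z, g t := by
  have hsplit : ∀ t, g t * zeroBiasKernel z t =
      z * ((Ioc 0 z).indicator g t - (Ioc z 0).indicator g t) := by
    intro t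
    simp only [zeroBiasKernel, indicator_apply, Pi.one_apply]
    split_ifs <;> ring
  simp_rw [hsplit]
  rw [integral_const_mul, integral_sub, integral_indicator measurableSet_Ioc,
    integral_indicator measurableSet_Ioc, intervalIntegral]
  · exact (integrable_indicator_iff measurableSet_Ioc).2 hg.1
  · exact (integrable_indicator_iff measurableSet_Ioc).2 hg.2

lemma integral_zeroBiasKernel (z : ℝ) : ∫ t, zeroBiasKernel z t = z ^ 2 := by
  simpa [sq] using integral_mul_zeroBiasKernel (g := fun _ => 1) (z := z) intervalIntegrable_const

lemma integrable_zeroBiasKernel (z : ℝ) : Integrable (zeroBiasKernel z) := by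
  refine (Integrable.sub ?_ ?_).const_mul z <;>
    exact (integrable_indicator_iff measurableSet_Ioc).2 (integrableOn_const measure_Ioc_lt_top.ne)

section Density

variable {Ω : Type*} [MeasurableSpace Ω] (P : Measure Ω) (Z : Ω → ℝ)

/-- For centred `Z` this is `E[Z 1{Z ≥ t}]`, so for a.e. `t` it is the paper's `E[Z 1{Z > t}]`. -/
noncomputable def zeroBiasDensity (t : ℝ) : ℝ :=
  ∫ ω, zeroBiasKernel (Z ω) t ∂P

noncomputable def zeroBiasMeasure : Measure ℝ :=
  volume.withDensity fun t => ENNReal.ofReal (zeroBiasDensity P Z t / ∫ ω, Z ω ^ 2 ∂P)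

variable {P Z}

lemma zeroBiasDensity_nonneg (t : ℝ) : 0 ≤ zeroBiasDensity P Z t :=
  integral_nonneg fun _ => zeroBiasKernel_nonneg _ _

variable [SFinite P]

lemma measurable_zeroBiasKernel_comp (hZ : Measurable Z) :
    Measurable fun p : ℝ × Ω => zeroBiasKernel (Z p.2) p.1 :=
  measurable_zeroBiasKernel.comp ((hZ.comp measurable_snd).prodMk measurable_fst)

lemma measurable_zeroBiasDensity (hZ : Measurable Z) : Measurable (zeroBiasDensity P Z) :=
  (measurable_zeroBiasKernel_comp hZ).stronglyMeasurable.integral_prod_right'.measurable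

lemma integrable_zeroBiasKernel_comp (hZ : Measurable Z)
    (hZ2 : Integrable (fun ω => Z ω ^ 2) P) :
    Integrable (fun p : ℝ × Ω => zeroBiasKernel (Z p.2) p.1) (volume.prod P) := by
  refine (integrable_prod_iff' (measurable_zeroBiasKernel_comp hZ).aestronglyMeasurable).2
    ⟨ae_of_all _ fun ω => integrable_zeroBiasKernel (Z ω), hZ2.congr (ae_of_all _ fun ω => ?_)⟩
  simp only [Real.norm_of_nonneg (zeroBiasKernel_nonneg _ _), integral_zeroBiasKernel]

lemma integral_mul_zeroBiasDensity (hZ : Measurable Z) (hZ2 : Integrable (fun ω => Z ω ^ 2) P)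
    {g : ℝ → ℝ} (hg : Measurable g) {C : ℝ} (hC : ∀ t, ‖g t‖ ≤ C) :
    ∫ t, g t * zeroBiasDensity P Z t = ∫ ω, Z ω * (∫ t in 0..Z ω, g t) ∂P := by
  have hprod : Integrable (Function.uncurry fun t ω => g t * zeroBiasKernel (Z ω) t)
      (volume.prod P) :=
    (integrable_zeroBiasKernel_comp hZ hZ2).bdd_mul (hg.comp measurable_fst).aestronglyMeasurable
      (ae_of_all _ fun p => hC p.1)
  have hg_int : ∀ z, IntervalIntegrable g volume 0 z := fun z =>
    intervalIntegrable_const.mono_fun' hg.aestronglyMeasurable (ae_of_all _ hC)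
  calc ∫ t, g t * zeroBiasDensity P Z t
      = ∫ t, ∫ ω, g t * zeroBiasKernel (Z ω) t ∂P := by
        simp only [zeroBiasDensity, integral_const_mul]
    _ = ∫ ω, (∫ t, g t * zeroBiasKernel (Z ω) t) ∂P := integral_integral_swap hprod
    _ = ∫ ω, Z ω * (∫ t in 0..Z ω, g t) ∂P := by
        simp only [integral_mul_zeroBiasKernel (hg_int _)]

lemma integral_zeroBiasDensity (hZ : Measurable Z) (hZ2 : Integrable (fun ω => Z ω ^ 2) P) :
    ∫ t, zeroBiasDensity P Z t = ∫ ω, Z ω ^ 2 ∂P := by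
  simpa [sq] using
    integral_mul_zeroBiasDensity hZ hZ2 measurable_const (fun _ => le_of_eq norm_one)

lemma integrable_zeroBiasDensity (hZ : Measurable Z) (hZ2 : Integrable (fun ω => Z ω ^ 2) P) :
    Integrable (zeroBiasDensity P Z) :=
  (integrable_zeroBiasKernel_comp hZ hZ2).integral_prod_left

end Density

section Measure

variable {Ω : Type*} [MeasurableSpace Ω] {P : Measure Ω} [SFinite P] {Z : Ω → ℝ}

lemma integral_zeroBiasMeasure (hZ : Measurable Z) (g : ℝ → ℝ) :
    ∫ t, g t ∂zeroBiasMeasure P Z =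
      (∫ ω, Z ω ^ 2 ∂P)⁻¹ * ∫ t, g t * zeroBiasDensity P Z t := by
  rw [zeroBiasMeasure, integral_withDensity_eq_integral_toReal_smul
    ((measurable_zeroBiasDensity hZ).div_const _).ennreal_ofReal
    (ae_of_all _ fun _ => ENNReal.ofReal_lt_top), ← integral_const_mul]
  congr 1 with t
  rw [ENNReal.toReal_ofReal (div_nonneg (zeroBiasDensity_nonneg t)
    (integral_nonneg fun _ => sq_nonneg _)), smul_eq_mul]
  ring

lemma isProbabilityMeasure_zeroBiasMeasure (hZ : Measurable Z) (hpos : 0 < ∫ ω, Z ω ^ 2 ∂P) :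
    IsProbabilityMeasure (zeroBiasMeasure P Z) := by
  have hZ2 := Integrable.of_integral_ne_zero hpos.ne'
  constructor
  rw [zeroBiasMeasure, withDensity_apply _ MeasurableSet.univ, Measure.restrict_univ,
    ← ofReal_integral_eq_lintegral_ofReal ((integrable_zeroBiasDensity hZ hZ2).div_const _)
      (ae_of_all _ fun t => div_nonneg (zeroBiasDensity_nonneg t) hpos.le),
    integral_div, integral_zeroBiasDensity hZ hZ2, div_self hpos.ne', ENNReal.ofReal_one]

theorem integral_mul_eq_integral_sq_mul_integral_deriv_zeroBiasMeasure
    (hZ : Measurable Z) (hZ1 : Integrable Z P) (hpos : 0 < ∫ ω, Z ω ^ 2 ∂P)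
    (hmean : ∫ ω, Z ω ∂P = 0)
    {f : ℝ → ℝ} {K : ℝ≥0} (hf : LipschitzWith K f) :
    ∫ ω, Z ω * f (Z ω) ∂P = (∫ ω, Z ω ^ 2 ∂P) * ∫ t, deriv f t ∂zeroBiasMeasure P Z := by
  have hZ2 := Integrable.of_integral_ne_zero hpos.ne'
  have hZf : Integrable (fun ω => Z ω * (f (Z ω) - f 0)) P := by
    refine (hZ2.const_mul K).mono'
      (hZ.mul ((hf.continuous.measurable.comp hZ).sub_const _)).aestronglyMeasurable
      (ae_of_all _ fun ω => ?_)
    have hlip := hf.dist_le_mul (Z ω) 0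
    rw [Real.dist_eq, Real.dist_eq, sub_zero] at hlip
    rw [norm_mul, Real.norm_eq_abs, Real.norm_eq_abs, ← sq_abs]
    nlinarith [abs_nonneg (Z ω)]
  have hftc : ∀ z, ∫ t in 0..z, deriv f t = f z - f 0 := fun z =>
    hf.lipschitzOnWith.absolutelyContinuousOnInterval.integral_deriv_eq_sub
  calc ∫ ω, Z ω * f (Z ω) ∂P = ∫ ω, (Z ω * (f (Z ω) - f 0) + f 0 * Z ω) ∂P := by
        congr with ω; ring
    _ = ∫ ω, Z ω * (f (Z ω) - f 0) ∂P := by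
        rw [integral_add hZf (hZ1.const_mul _), integral_const_mul, hmean, mul_zero, add_zero]
    _ = ∫ t, deriv f t * zeroBiasDensity P Z t := by
        simp only [← hftc]
        exact (integral_mul_zeroBiasDensity hZ hZ2 (measurable_deriv f)
          fun _ => norm_deriv_le_of_lipschitz hf).symm
    _ = (∫ ω, Z ω ^ 2 ∂P) * ∫ t, deriv f t ∂zeroBiasMeasure P Z := by
        rw [integral_zeroBiasMeasure hZ, mul_inv_cancel_left₀ hpos.ne']

end Measure

theorem zero_bias_distribution_exists_general
    {Ω : Type*} [MeasureSpace Ω] [IsProbabilityMeasure (ℙ : Measure Ω)]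
    (Z : Ω → ℝ) (hZ : Measurable Z) (σ : ℝ) (hσ : 0 < σ)
    (hmean : ∫ ω, Z ω ∂ℙ = 0) (hvar : ∫ ω, Z ω ^ 2 ∂ℙ = σ ^ 2) :
    ∃ μ : Measure ℝ, IsProbabilityMeasure μ ∧
      ∀ (f : ℝ → ℝ) (K : NNReal), LipschitzWith K f →
        ∫ ω, Z ω * f (Z ω) ∂ℙ = σ ^ 2 * ∫ t, deriv f t ∂μ := by
  have hpos : 0 < ∫ ω, Z ω ^ 2 ∂ℙ := hvar ▸ pow_pos hσ 2
  have hZ1 : Integrable Z ℙ :=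
    ((memLp_two_iff_integrable_sq hZ.aestronglyMeasurable).2
      (Integrable.of_integral_ne_zero hpos.ne')).integrable one_le_two
  refine ⟨zeroBiasMeasure ℙ Z, isProbabilityMeasure_zeroBiasMeasure hZ hpos, fun f K hf => ?_⟩
  rw [← hvar]
  exact integral_mul_eq_integral_sq_mul_integral_deriv_zeroBiasMeasure hZ hZ1 hpos hmean hf

/-- Existence of the zero-bias transformation: for `z` with mean `0` and
variance `σ² > 0` (and finite third absolute moment), there is a distribution
`μ` (the law of `z*`) such that `E[z f(z)] = σ² E[f'(z*)]` for all Lipschitz `f`. -/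
theorem zero_bias_distribution_exists
    {Ω : Type*} [MeasureSpace Ω] [IsProbabilityMeasure (ℙ : Measure Ω)]
    (Z : Ω → ℝ) (hZ : Measurable Z) (σ : ℝ) (hσ : 0 < σ)
    (hmean : ∫ ω, Z ω ∂ℙ = 0) (hvar : ∫ ω, Z ω ^ 2 ∂ℙ = σ ^ 2)
    (hthird : Integrable (fun ω => |Z ω| ^ 3) ℙ) :
    ∃ μ : Measure ℝ, IsProbabilityMeasure μ ∧
      ∀ (f : ℝ → ℝ) (K : NNReal), LipschitzWith K f →
        ∫ ω, Z ω * f (Z ω) ∂ℙ = σ ^ 2 * ∫ t, deriv f t ∂μ :=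
  zero_bias_distribution_exists_general Z hZ σ hσ hmean hvar
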